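/- No two distinct B_n-submodules of V are isomorphic as B_n-modules. -/
import Mathlib


open Finset

/-- `f : Fin n → Option (Fin n)` represents an injective partial map of `{1,…,n}`
(elements 0-indexed): `f a = some x` means `a ∈ D(f)` with image `x`. Injectivity: -/
def IsPartialInj {n : ℕ} (f : Fin n → Option (Fin n)) : Prop :=
  ∀ a b x, f a = some x → f b = some x → a = b

/-- order preserving: `a < b` in the domain implies `f a < f b`. -/
def IsOrderPres {n : ℕ} (f : Fin n → Option (Fin n)) : Prop :=
  ∀ a b x y, a < b → f a = some x → f b = some y → x < y

/-- order decreasing: `f a ≤ a` on the domain. -/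
def IsOrderDec {n : ℕ} (f : Fin n → Option (Fin n)) : Prop :=
  ∀ a x, f a = some x → x ≤ a

/-- The planar upper triangular rook monoid `B_n`: order-preserving,
order-decreasing injective partial maps of `{1,…,n}`. -/
def Bn (n : ℕ) : Set (Fin n → Option (Fin n)) :=
  {f | IsPartialInj f ∧ IsOrderPres f ∧ IsOrderDec f}

/-- domain of the partial map. -/
def domf {n : ℕ} (f : Fin n → Option (Fin n)) : Finset (Fin n) :=
  Finset.univ.filter (fun a => (f a).isSome)

/-- image of a finite set under the partial map. -/
def fimg {n : ℕ} (f : Fin n → Option (Fin n)) (S : Finset (Fin n)) : Finset (Fin n) :=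
  S.biUnion (fun a => (f a).toFinset)

/-- the linear action of a partial map `f` on `V = ⊕_{S ⊆ n} F·v_S`:
`f · v_S = v_{f(S)}` if `S ⊆ D(f)`, and `0` otherwise. -/
noncomputable def actMap (F : Type*) [Field F] {n : ℕ} (f : Fin n → Option (Fin n)) :
    (Finset (Fin n) →₀ F) →ₗ[F] (Finset (Fin n) →₀ F) :=
  Finsupp.lsum F (fun S => if S ⊆ domf f then Finsupp.lsingle (fimg f S) else 0)

/-- a subspace `W` of `V` is a `B_n`-submodule if it is invariant under the action. -/
def IsBnSub {n : ℕ} {F : Type*} [Field F] (W : Submodule F (Finset (Fin n) →₀ F)) : Prop :=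
  ∀ f ∈ Bn n, ∀ v ∈ W, actMap F f v ∈ W

/-- the `B_n`-submodule of `V` generated by a vector `v`. -/
noncomputable def genMod (F : Type*) [Field F] {n : ℕ} (v : Finset (Fin n) →₀ F) :
    Submodule F (Finset (Fin n) →₀ F) :=
  sInf {W | IsBnSub W ∧ v ∈ W}

-- helpers
def eMap {n : ℕ} (T : Finset (Fin n)) : Fin n → Option (Fin n) :=
  fun a => if a ∈ T then some a else none

lemma eMap_mem_Bn {n : ℕ} (T : Finset (Fin n)) : eMap T ∈ Bn n := by
  refine ⟨?_, ?_, ?_⟩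
  · intro a b x ha hb
    unfold eMap at ha hb
    split_ifs at ha hb
    simp_all
  · intro a b x y hab ha hb
    unfold eMap at ha hb
    split_ifs at ha hb
    simp_all
  · intro a x ha
    unfold eMap at ha
    split_ifs at ha
    simp_all

lemma domf_eMap {n : ℕ} (T : Finset (Fin n)) : domf (eMap T) = T := by
  ext a; simp [domf, eMap, apply_ite Option.isSome]

lemma fimg_eMap {n : ℕ} {T S : Finset (Fin n)} (h : S ⊆ T) : fimg (eMap T) S = S := by
  ext x
  simp only [fimg, Finset.mem_biUnion, eMap]
  constructor
  · rintro ⟨a, ha, hx⟩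
    rw [if_pos (h ha)] at hx
    simp only [Option.toFinset_some, Finset.mem_singleton] at hx
    exact hx ▸ ha
  · intro hx
    exact ⟨x, hx, by rw [if_pos (h hx)]; simp⟩

lemma actMap_single (F : Type*) [Field F] {n : ℕ} (f : Fin n → Option (Fin n))
    (S : Finset (Fin n)) (c : F) :
    actMap F f (Finsupp.single S c) =
      if S ⊆ domf f then Finsupp.single (fimg f S) c else 0 := by
  simp [actMap, apply_ite (fun (g : F →ₗ[F] (Finset (Fin n) →₀ F)) => g c)]

lemma actMap_eMap_single (F : Type*) [Field F] {n : ℕ} (T S : Finset (Fin n)) (c : F) :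
    actMap F (eMap T) (Finsupp.single S c) =
      if S ⊆ T then Finsupp.single S c else 0 := by
  rw [actMap_single, domf_eMap]
  split_ifs with h
  · rw [fimg_eMap h]
  · rfl

lemma sum_neg_one_pow_F {α : Type*} [DecidableEq α] (F : Type*) [Field F] (S : Finset α) :
    ∑ T ∈ S.powerset, ((-1:F)^T.card) = if S = ∅ then 1 else 0 := by
  have := @Finset.sum_powerset_neg_one_pow_card α _ S
  have h2 : ((∑ m ∈ S.powerset, (-1 : ℤ) ^ m.card : ℤ) : F)
      = ∑ T ∈ S.powerset, ((-1:F)^T.card) := by push_cast; ring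
  rw [this] at h2
  rw [← h2]
  split_ifs <;> simp

lemma alt_sum {α : Type*} [DecidableEq α] (F : Type*) [Field F] (S R : Finset α) :
    ∑ T ∈ S.powerset.filter (fun T => R ⊆ T), ((-1:F)^(S.card - T.card)) =
      if R = S then 1 else 0 := by
  by_cases hRS : R ⊆ S
  · have h1 : ∑ T ∈ S.powerset.filter (fun T => R ⊆ T), ((-1:F)^(S.card - T.card))
        = ∑ T' ∈ (S \ R).powerset, ((-1:F)^((S \ R).card - T'.card)) := by
      refine Finset.sum_bij' (fun T _ => T \ R) (fun T' _ => T' ∪ R) ?_ ?_ ?_ ?_ ?_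
      · intro T hT
        simp only [Finset.mem_filter, Finset.mem_powerset] at hT
        exact Finset.mem_powerset.mpr (sdiff_subset_sdiff hT.1 le_rfl)
      · intro T' hT'
        simp only [Finset.mem_powerset] at hT'
        simp only [Finset.mem_filter, Finset.mem_powerset]
        exact ⟨Finset.union_subset (hT'.trans Finset.sdiff_subset) hRS, Finset.subset_union_right⟩
      · intro T hT
        simp only [Finset.mem_filter, Finset.mem_powerset] at hT
        exact Finset.sdiff_union_of_subset hT.2
      · intro T' hT'
        have hT'' := Finset.mem_powerset.mp hT'
        show (T' ∪ R) \ R = T'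
        rw [Finset.union_sdiff_right, Finset.sdiff_eq_self_iff_disjoint]
        exact Finset.disjoint_of_subset_left hT'' Finset.sdiff_disjoint
      · intro T hT
        simp only [Finset.mem_filter, Finset.mem_powerset] at hT
        show ((-1:F)^(S.card - T.card)) = ((-1:F)^((S \ R).card - (T \ R).card))
        congr 1
        have h1 := Finset.card_sdiff_of_subset hT.2
        have h2 := Finset.card_sdiff_of_subset hRS
        have h3 := Finset.card_le_card hT.1
        have h4 := Finset.card_le_card hT.2
        have h5 := Finset.card_le_card hRS
        omega
    rw [h1]
    have key : ∀ T' ∈ (S \ R).powerset, ((-1:F)^((S \ R).card - T'.card))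
        = (-1:F)^((S\R).card) * (-1:F)^T'.card := by
      intro T' hT'
      have h := Finset.card_le_card (Finset.mem_powerset.mp hT')
      have h2 : (-1:F)^((S\R).card) = (-1)^((S\R).card - T'.card) * (-1)^(T'.card) := by
        rw [← pow_add]; congr 1; omega
      rw [h2, mul_assoc, ← pow_add, ← two_mul, pow_mul]
      norm_num
    rw [Finset.sum_congr rfl key, ← Finset.mul_sum, sum_neg_one_pow_F]
    by_cases h : S ⊆ R
    · have he : S \ R = ∅ := Finset.sdiff_eq_empty_iff_subset.mpr h
      rw [he, if_pos rfl, if_pos (Finset.Subset.antisymm hRS h)]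
      simp
    · have he : S \ R ≠ ∅ := fun he => h (Finset.sdiff_eq_empty_iff_subset.mp he)
      rw [if_neg he, if_neg, mul_zero]
      rintro rfl; exact h le_rfl
  · rw [Finset.filter_false_of_mem, Finset.sum_empty, if_neg]
    · rintro rfl; exact hRS le_rfl
    · intro T hT hR
      exact hRS (hR.trans (Finset.mem_powerset.mp hT))

noncomputable def piMap (F : Type*) [Field F] {n : ℕ} (S : Finset (Fin n)) :
    (Finset (Fin n) →₀ F) →ₗ[F] (Finset (Fin n) →₀ F) :=
  ∑ T ∈ S.powerset, ((-1:F)^(S.card - T.card)) • actMap F (eMap T)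

lemma piMap_apply (F : Type*) [Field F] {n : ℕ} (S : Finset (Fin n))
    (v : Finset (Fin n) →₀ F) : piMap F S v = Finsupp.single S (v S) := by
  have h : piMap F S = (Finsupp.lsingle S).comp (Finsupp.lapply S) := by
    apply Finsupp.lhom_ext
    intro R c
    simp only [piMap, LinearMap.sum_apply, LinearMap.smul_apply, actMap_eMap_single,
      LinearMap.comp_apply, Finsupp.lapply_apply, Finsupp.lsingle_apply, smul_ite, smul_zero]
    rw [← Finset.sum_filter, ← Finset.sum_smul, alt_sum]
    rw [Finsupp.single_apply]
    split_ifs with hRS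
    · subst hRS; simp
    · simp [Finsupp.single_apply, Ne.symm hRS]
  rw [h]
  simp

lemma single_mem_of_apply_ne {n : ℕ} {F : Type*} [Field F]
    {Wm : Submodule F (Finset (Fin n) →₀ F)} (hWm : IsBnSub Wm)
    {v : Finset (Fin n) →₀ F} (hv : v ∈ Wm) (S : Finset (Fin n)) :
    Finsupp.single S (v S) ∈ Wm := by
  rw [← piMap_apply]
  simp only [piMap, LinearMap.sum_apply, LinearMap.smul_apply]
  exact Submodule.sum_mem _ fun T _ => Submodule.smul_mem _ _ (hWm _ (eMap_mem_Bn T) v hv)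

lemma single_one_mem {n : ℕ} {F : Type*} [Field F]
    {Wm : Submodule F (Finset (Fin n) →₀ F)} (hWm : IsBnSub Wm)
    {v : Finset (Fin n) →₀ F} (hv : v ∈ Wm) {S : Finset (Fin n)} (hS : v S ≠ 0) :
    Finsupp.single S (1:F) ∈ Wm := by
  have h := single_mem_of_apply_ne hWm hv S
  have : Finsupp.single S (1:F) = (v S)⁻¹ • Finsupp.single S (v S) := by
    rw [Finsupp.smul_single, smul_eq_mul, inv_mul_cancel₀ hS]
  rw [this]
  exact Submodule.smul_mem _ _ h


/-- no two distinct `B_n`-submodules of `V` are isomorphic as `B_n`-modules. -/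
theorem no_two_isomorphic (n : ℕ) (F : Type*) [Field F] [CharZero F]
    (W U : Submodule F (Finset (Fin n) →₀ F)) (hW : IsBnSub W) (hU : IsBnSub U)
    (σ : W ≃ₗ[F] U)
    (hσ : ∀ f ∈ Bn n, ∀ (w : W) (h : actMap F f (w : Finset (Fin n) →₀ F) ∈ W),
      ((σ ⟨actMap F f (w : Finset (Fin n) →₀ F), h⟩ : U) : Finset (Fin n) →₀ F) =
        actMap F f ((σ w : U) : Finset (Fin n) →₀ F)) :
    W = U := by
  -- piMap stabilizes W
  have hpiW : ∀ (S : Finset (Fin n)) (w : W), piMap F S (w : Finset (Fin n) →₀ F) ∈ W := by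
    intro S w
    simp only [piMap, LinearMap.sum_apply, LinearMap.smul_apply]
    exact Submodule.sum_mem _ fun T _ => Submodule.smul_mem _ _ (hW _ (eMap_mem_Bn T) _ w.2)
  -- equivariance for piMap
  have hpi : ∀ (S : Finset (Fin n)) (w : W),
      ((σ ⟨piMap F S (w : Finset (Fin n) →₀ F), hpiW S w⟩ : U) : Finset (Fin n) →₀ F) =
        piMap F S ((σ w : U) : Finset (Fin n) →₀ F) := by
    intro S w
    have hdecomp : (⟨piMap F S (w : Finset (Fin n) →₀ F), hpiW S w⟩ : W) =
        ∑ T ∈ S.powerset, ((-1:F)^(S.card - T.card)) •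
          (⟨actMap F (eMap T) (w : Finset (Fin n) →₀ F),
            hW _ (eMap_mem_Bn T) _ w.2⟩ : W) := by
      apply Subtype.ext
      push_cast
      simp only [piMap, LinearMap.sum_apply, LinearMap.smul_apply]
    have hterm : ∀ T ∈ S.powerset,
        ((σ (((-1:F)^(S.card - T.card)) • (⟨actMap F (eMap T) (w : Finset (Fin n) →₀ F),
            hW _ (eMap_mem_Bn T) _ w.2⟩ : W)) : U) : Finset (Fin n) →₀ F) =
          ((-1:F)^(S.card - T.card)) • actMap F (eMap T) ((σ w : U) : Finset (Fin n) →₀ F) := by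
      intro T _
      rw [map_smul, Submodule.coe_smul, hσ (eMap T) (eMap_mem_Bn T) w _]
    rw [hdecomp, map_sum, AddSubmonoidClass.coe_finset_sum, Finset.sum_congr rfl hterm]
    simp only [piMap, LinearMap.sum_apply, LinearMap.smul_apply]
  -- key: σ sends v_S-lines to v_S-lines
  have key : ∀ (w : W) (S : Finset (Fin n)), (w : Finset (Fin n) →₀ F) = Finsupp.single S 1 →
      ((σ w : U) : Finset (Fin n) →₀ F) =
        Finsupp.single S (((σ w : U) : Finset (Fin n) →₀ F) S) := by
    intro w S hw
    have h1 : (⟨piMap F S (w : Finset (Fin n) →₀ F), hpiW S w⟩ : W) = w := by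
      apply Subtype.ext
      simp only [hw, piMap_apply, Finsupp.single_eq_same]
    have h2 := hpi S w
    rw [h1] at h2
    rw [← piMap_apply]
    exact h2
  -- forward: singles in W are in U
  have hWU : ∀ S : Finset (Fin n), Finsupp.single S (1:F) ∈ W → Finsupp.single S (1:F) ∈ U := by
    intro S hS
    set w : W := ⟨Finsupp.single S 1, hS⟩ with hwdef
    have hk := key w S rfl
    have hne : ((σ w : U) : Finset (Fin n) →₀ F) S ≠ 0 := by
      intro h0
      rw [h0, Finsupp.single_zero] at hk
      have : σ w = 0 := by
        apply Subtype.ext; exact hk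
      have : w = 0 := by
        have := σ.injective (this.trans (map_zero σ).symm)
        exact this
      have : (w : Finset (Fin n) →₀ F) = 0 := by rw [this]; rfl
      rw [hwdef] at this
      exact one_ne_zero (Finsupp.single_eq_zero.mp this)
    exact single_one_mem hU (σ w).2 hne
  -- backward: singles in U are in W
  have hUW : ∀ S : Finset (Fin n), Finsupp.single S (1:F) ∈ U → Finsupp.single S (1:F) ∈ W := by
    intro S hS
    set u : U := ⟨Finsupp.single S 1, hS⟩ with hudef
    set w : W := σ.symm u with hwdef
    have hσw : σ w = u := by rw [hwdef, LinearEquiv.apply_symm_apply]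
    have h2 := hpi S w
    rw [hσw] at h2
    have h3 : piMap F S ((u : U) : Finset (Fin n) →₀ F) = Finsupp.single S (1:F) := by
      rw [hudef, piMap_apply]
      simp
    rw [h3] at h2
    have hvS : (w : Finset (Fin n) →₀ F) S ≠ 0 := by
      intro h0
      have hz : piMap F S (w : Finset (Fin n) →₀ F) = 0 := by
        rw [piMap_apply, h0, Finsupp.single_zero]
      have : (⟨piMap F S (w : Finset (Fin n) →₀ F), hpiW S w⟩ : W) = 0 :=
        Subtype.ext hz
      rw [this, map_zero] at h2
      exact one_ne_zero (Finsupp.single_eq_zero.mp h2.symm)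
    exact single_one_mem hW w.2 hvS
  -- conclude
  ext v
  constructor
  · intro hv
    have hdec : v = ∑ S ∈ v.support, Finsupp.single S (v S) := (Finsupp.sum_single v).symm
    rw [hdec]
    refine Submodule.sum_mem _ fun S hSs => ?_
    have h1 : Finsupp.single S (1:F) ∈ U :=
      hWU S (single_one_mem hW hv (Finsupp.mem_support_iff.mp hSs))
    have h2 := Submodule.smul_mem U (v S) h1
    rwa [Finsupp.smul_single, smul_eq_mul, mul_one] at h2
  · intro hv
    have hdec : v = ∑ S ∈ v.support, Finsupp.single S (v S) := (Finsupp.sum_single v).symm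
    rw [hdec]
    refine Submodule.sum_mem _ fun S hSs => ?_
    have h1 : Finsupp.single S (1:F) ∈ W :=
      hUW S (single_one_mem hU hv (Finsupp.mem_support_iff.mp hSs))
    have h2 := Submodule.smul_mem W (v S) h1
    rwa [Finsupp.smul_single, smul_eq_mul, mul_one] at h2
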